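/- arXiv:2206.10397 — 2 statements merged into one kernel-verified Lean document; each statement's English description precedes it below -/
import Mathlib

section
/- (One-step auxiliary MHE, N = 1.) Suppose the matrices P (symmetric positive definite), L̄_xx (symmetric), L_xw = L_wxᵀ, L_ww (symmetric positive definite), L_xθ, L_wθ, X̂₀ satisfy: S := L_xw·L_ww⁻¹·L_wx - L̄_xx, T := L_xw·L_ww⁻¹·L_wθ - L_xθ, and I - P⁻¹·S is invertible with C := (I - P⁻¹·S)⁻¹·P⁻¹. If (X, W) satisfies the KKT conditions (P + L̄_xx)·X - P·X̂₀ + L_xθ + L_xw·W = 0 and L_wx·X + L_ww·W + L_wθ = 0 (i.e., with zero dual variable), then X = (I + C·S)·(P⁻¹·T + X̂₀). -/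
/-! Eliminating `W` with the second KKT equation turns the first one into the reduced equation
`(P - S) X = T + P X̂₀`. Factoring `P - S = P (1 - P⁻¹ S)` gives `(1 - P⁻¹ S) X = P⁻¹ T + X̂₀`,
and `1 + C S = (1 - P⁻¹ S)⁻¹` because `C S = (1 - P⁻¹ S)⁻¹ P⁻¹ S`. -/

open Matrix

namespace Matrix

variable {ι κ μ : Type*} [Fintype ι] [Fintype κ] [DecidableEq κ]
  {α : Type*} [CommRing α]

theorem eq_neg_inv_mul_of_add_mul_add_eq_zero {A : Matrix κ κ α} (hA : IsUnit A.det)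
    {B : Matrix κ ι α} {X : Matrix ι μ α} {W Y : Matrix κ μ α}
    (h : B * X + A * W + Y = 0) : W = -(A⁻¹ * (B * X + Y)) := by
  have hW : A * W = -(B * X + Y) := by
    rw [eq_neg_iff_add_eq_zero, ← h]
    abel
  rw [← Matrix.mul_neg, ← hW, nonsing_inv_mul_cancel_left A W hA]

variable [DecidableEq ι]

theorem one_sub_inv_mul_mul_eq_inv_mul {P S : Matrix ι ι α} (hP : IsUnit P.det)
    {X Y : Matrix ι μ α} (h : (P - S) * X = Y) : (1 - P⁻¹ * S) * X = P⁻¹ * Y := by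
  rw [← h, Matrix.sub_mul, Matrix.sub_mul, Matrix.one_mul, Matrix.mul_assoc, Matrix.mul_sub,
    nonsing_inv_mul_cancel_left P X hP]

theorem one_add_inv_one_sub_mul {B : Matrix ι ι α} (hB : IsUnit (1 - B)) :
    1 + (1 - B)⁻¹ * B = (1 - B)⁻¹ := by
  have hdet : IsUnit (1 - B).det := (isUnit_iff_isUnit_det _).mp hB
  calc 1 + (1 - B)⁻¹ * B = (1 - B)⁻¹ * ((1 - B) + B) := by
        rw [Matrix.mul_add, nonsing_inv_mul _ hdet]
    _ = (1 - B)⁻¹ := by rw [sub_add_cancel, Matrix.mul_one]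

end Matrix

theorem stmt_8_general (n m p : ℕ)
    (P Lbarxx : Matrix (Fin n) (Fin n) ℝ) (hP : P.PosDef)
    (Lww : Matrix (Fin m) (Fin m) ℝ) (hLww : Lww.PosDef)
    (Lwx : Matrix (Fin m) (Fin n) ℝ) (Lxw : Matrix (Fin n) (Fin m) ℝ)
    (Lxθ : Matrix (Fin n) (Fin p) ℝ) (Lwθ : Matrix (Fin m) (Fin p) ℝ)
    (Xhat0 : Matrix (Fin n) (Fin p) ℝ)
    (S : Matrix (Fin n) (Fin n) ℝ) (hS : S = Lxw * Lww⁻¹ * Lwx - Lbarxx)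
    (T : Matrix (Fin n) (Fin p) ℝ) (hT : T = Lxw * Lww⁻¹ * Lwθ - Lxθ)
    (hinv : IsUnit (1 - P⁻¹ * S))
    (C : Matrix (Fin n) (Fin n) ℝ) (hC : C = (1 - P⁻¹ * S)⁻¹ * P⁻¹)
    (X : Matrix (Fin n) (Fin p) ℝ) (W : Matrix (Fin m) (Fin p) ℝ)
    (hkkt1 : (P + Lbarxx) * X - P * Xhat0 + Lxθ + Lxw * W = 0)
    (hkkt2 : Lwx * X + Lww * W + Lwθ = 0) :
    X = (1 + C * S) * (P⁻¹ * T + Xhat0) := by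
  have hPdet : IsUnit P.det := (isUnit_iff_isUnit_det P).mp hP.isUnit
  have hW := eq_neg_inv_mul_of_add_mul_add_eq_zero
    ((isUnit_iff_isUnit_det Lww).mp hLww.isUnit) hkkt2
  have hreduced : (P - S) * X = T + P * Xhat0 := by
    subst hS hT hW
    simp only [Matrix.mul_add, Matrix.mul_neg, Matrix.sub_mul, Matrix.add_mul,
      Matrix.mul_assoc] at hkkt1 ⊢
    linear_combination (norm := noncomm_ring) hkkt1
  have hA : (1 - P⁻¹ * S) * X = P⁻¹ * T + Xhat0 := by
    rw [one_sub_inv_mul_mul_eq_inv_mul hPdet hreduced, Matrix.mul_add,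
      nonsing_inv_mul_cancel_left P Xhat0 hPdet]
  rw [hC, Matrix.mul_assoc, one_add_inv_one_sub_mul hinv, ← hA,
    nonsing_inv_mul_cancel_left _ X ((isUnit_iff_isUnit_det _).mp hinv)]

theorem stmt_8 (n m p : ℕ)
    (P Lbarxx : Matrix (Fin n) (Fin n) ℝ) (hP : P.PosDef) (hLbarxx : Lbarxx.IsSymm)
    (Lww : Matrix (Fin m) (Fin m) ℝ) (hLww : Lww.PosDef)
    (Lwx : Matrix (Fin m) (Fin n) ℝ) (Lxw : Matrix (Fin n) (Fin m) ℝ) (hLxw : Lxw = Lwxᵀ)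
    (Lxθ : Matrix (Fin n) (Fin p) ℝ) (Lwθ : Matrix (Fin m) (Fin p) ℝ)
    (Xhat0 : Matrix (Fin n) (Fin p) ℝ)
    (S : Matrix (Fin n) (Fin n) ℝ) (hS : S = Lxw * Lww⁻¹ * Lwx - Lbarxx)
    (T : Matrix (Fin n) (Fin p) ℝ) (hT : T = Lxw * Lww⁻¹ * Lwθ - Lxθ)
    (hinv : IsUnit (1 - P⁻¹ * S))
    (C : Matrix (Fin n) (Fin n) ℝ) (hC : C = (1 - P⁻¹ * S)⁻¹ * P⁻¹)
    (X : Matrix (Fin n) (Fin p) ℝ) (W : Matrix (Fin m) (Fin p) ℝ)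
    (hkkt1 : (P + Lbarxx) * X - P * Xhat0 + Lxθ + Lxw * W = 0)
    (hkkt2 : Lwx * X + Lww * W + Lwθ = 0) :
    X = (1 + C * S) * (P⁻¹ * T + Xhat0) :=
  stmt_8_general n m p P Lbarxx hP Lww hLww Lwx Lxw Lxθ Lwθ Xhat0 S hS T hT hinv C hC X W hkkt1
    hkkt2
end

section
/- (Forward-induction step of the Kalman-filter gradient solver.) Let F̄ ∈ ℝ^{n×n}, G ∈ ℝ^{n×m}, L_ww ∈ ℝ^{m×m} symmetric positive definite, C_k ∈ ℝ^{n×n}, and define P_{k+1} := F̄·C_k·F̄ᵀ + G·L_ww⁻¹·Gᵀ. Let S_{k+1}, T_{k+1} be given, with I - P_{k+1}·S_{k+1} invertible and C_{k+1} := (I - P_{k+1}·S_{k+1})⁻¹·P_{k+1}. Define X_pred := F̄·X̂_k^KF - G·L_ww⁻¹·L_wθ and X̂_{k+1}^KF := (I + C_{k+1}·S_{k+1})·X_pred + C_{k+1}·T_{k+1}. Suppose X_k = X̂_k^KF + C_k·F̄ᵀ·Λ_k, Λ_k = S_{k+1}·X_{k+1} + T_{k+1} + F̄_{k+1}ᵀ·Λ_{k+1},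 and X_{k+1} = F̄·X_k - G·L_ww⁻¹·L_wθ + G·L_ww⁻¹·Gᵀ·Λ_k. Then X_{k+1} = X̂_{k+1}^KF + C_{k+1}·F̄_{k+1}ᵀ·Λ_{k+1}. -/
open Matrix

theorem stmt_10 (n m p : ℕ)
    (Fbar : Matrix (Fin n) (Fin n) ℝ) (G : Matrix (Fin n) (Fin m) ℝ)
    (Lww : Matrix (Fin m) (Fin m) ℝ) (hLww : Lww.PosDef)
    (Lwθ : Matrix (Fin m) (Fin p) ℝ)
    (Ck : Matrix (Fin n) (Fin n) ℝ)
    (Pk1 : Matrix (Fin n) (Fin n) ℝ) (hPk1 : Pk1 = Fbar * Ck * Fbarᵀ + G * Lww⁻¹ * Gᵀ)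
    (Sk1 : Matrix (Fin n) (Fin n) ℝ) (Tk1 : Matrix (Fin n) (Fin p) ℝ)
    (hinv : IsUnit (1 - Pk1 * Sk1))
    (Ck1 : Matrix (Fin n) (Fin n) ℝ) (hCk1 : Ck1 = (1 - Pk1 * Sk1)⁻¹ * Pk1)
    (XhatKF : Matrix (Fin n) (Fin p) ℝ)
    (Xpred : Matrix (Fin n) (Fin p) ℝ) (hXpred : Xpred = Fbar * XhatKF - G * Lww⁻¹ * Lwθ)
    (XhatKF1 : Matrix (Fin n) (Fin p) ℝ)
    (hXhatKF1 : XhatKF1 = (1 + Ck1 * Sk1) * Xpred + Ck1 * Tk1)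
    (Fbar1 : Matrix (Fin n) (Fin n) ℝ)
    (Xk Xk1 Λk Λk1 : Matrix (Fin n) (Fin p) ℝ)
    (hXk : Xk = XhatKF + Ck * Fbarᵀ * Λk)
    (hΛk : Λk = Sk1 * Xk1 + Tk1 + Fbar1ᵀ * Λk1)
    (hdyn : Xk1 = Fbar * Xk - G * Lww⁻¹ * Lwθ + G * Lww⁻¹ * Gᵀ * Λk) :
    Xk1 = XhatKF1 + Ck1 * Fbar1ᵀ * Λk1 := by
  have hdet : IsUnit (1 - Pk1 * Sk1).det :=
    (Matrix.isUnit_iff_isUnit_det _).mp hinv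
  have hAinv : (1 - Pk1 * Sk1)⁻¹ * (1 - Pk1 * Sk1) = 1 :=
    Matrix.nonsing_inv_mul _ hdet
  -- Step 1: Xk1 = Xpred + Pk1 * Λk
  have h1 : Xk1 = Xpred + Pk1 * Λk := by
    rw [hdyn, hXk, hXpred, hPk1]
    simp only [Matrix.mul_add, Matrix.add_mul, Matrix.mul_assoc]
    abel
  -- Step 2
  have e : Xpred + Pk1 * Λk
      = Xpred + Pk1 * Sk1 * Xk1 + Pk1 * (Tk1 + Fbar1ᵀ * Λk1) := by
    rw [hΛk]
    simp only [Matrix.mul_add, Matrix.mul_assoc]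
    abel
  have h2 : (1 - Pk1 * Sk1) * Xk1 = Xpred + Pk1 * (Tk1 + Fbar1ᵀ * Λk1) := by
    rw [Matrix.sub_mul, Matrix.one_mul]
    nth_rewrite 1 [h1]
    rw [e]
    abel
  have h3 : Xk1 = (1 - Pk1 * Sk1)⁻¹ * (Xpred + Pk1 * (Tk1 + Fbar1ᵀ * Λk1)) := by
    rw [← h2, ← Matrix.mul_assoc, hAinv, Matrix.one_mul]
  -- 1 + Ck1 * Sk1 = (1 - Pk1*Sk1)⁻¹
  have hthis : (1 - Pk1 * Sk1)⁻¹ - (1 - Pk1 * Sk1)⁻¹ * (Pk1 * Sk1) = 1 := by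
    have h := hAinv
    rw [Matrix.mul_sub, Matrix.mul_one] at h
    exact h
  have h4 : 1 + Ck1 * Sk1 = (1 - Pk1 * Sk1)⁻¹ := by
    rw [hCk1, Matrix.mul_assoc, add_comm]
    exact (sub_eq_iff_eq_add'.mp hthis).symm
  rw [h3, hXhatKF1, h4, hCk1]
  simp only [Matrix.mul_add, Matrix.mul_assoc]
  abel
end
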